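/- arXiv:2111.12219 — 2 statements merged into one kernel-verified Lean document; each statement's English description precedes it below -/
import Mathlib

section
/- Let η, θ ∈ ℝ with 0 < η and η > A₊², where A₊ = (1+η)cos(2θ)/2. Set A₋ = (1−η)cos(2θ)/2, B = √(η − A₊²), and φ = arccos(A₊/√η). Then for every natural number t, the t-th power of G_p(η,θ) = [[η cos 2θ, sin 2θ],[−η sin 2θ, cos 2θ]] equals ((√η)^t / B) · [[B cos(φt) − A₋ sin(φt), sin(φt) sin 2θ],[−η sin(φt) sin 2θ, B cos(φt) + A₋ sin(φt)]]. -/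
open Matrix Real

/-- The noisy Grover iteration with phase-flip noise of parameter `η`. -/
noncomputable def Gp (η θ : ℝ) : Matrix (Fin 2) (Fin 2) ℝ :=
  !![η * Real.cos (2 * θ), Real.sin (2 * θ); -η * Real.sin (2 * θ), Real.cos (2 * θ)]

/-!
`Gp η θ` equals `Ap • 1 + K` with `K = !![-Am, sin 2θ; -η sin 2θ, Am]` traceless and
`K * K = -B² • 1`, so `J = B⁻¹ • K` is a square root of `-1` and
`Gp η θ = √η • (cos φ • 1 + sin φ • J)`. The real subalgebra generated by `J` is a copy of `ℂ`
in which this is `√η e^{iφ}`, and de Moivre's formula gives the `t`-th power.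
-/

theorem cos_smul_one_add_sin_smul_pow {A : Type*} [Ring A] [Algebra ℝ A] {J : A}
    (hJ : J * J = -1) (φ : ℝ) (t : ℕ) :
    (cos φ • (1 : A) + sin φ • J) ^ t = cos (φ * t) • (1 : A) + sin (φ * t) • J := by
  have hlift (ψ : ℝ) : Complex.liftAux J hJ (Complex.cos ψ + Complex.sin ψ * Complex.I) =
      cos ψ • (1 : A) + sin ψ • J := by
    simp [← Complex.ofReal_cos, ← Complex.ofReal_sin, Algebra.algebraMap_eq_smul_one]
  rw [← hlift, ← map_pow, Complex.cos_add_sin_mul_I_pow, ← hlift, mul_comm φ]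
  push_cast
  rfl

theorem sqrt_mul_cos_arccos_div_sqrt {a x : ℝ} (h : a ^ 2 ≤ x) :
    √x * cos (arccos (a / √x)) = a := by
  rcases (sq_nonneg a).trans h |>.eq_or_lt with hx | hx
  · subst hx
    nlinarith [sq_nonneg a]
  have hs : 0 < √x := sqrt_pos.mpr hx
  have habs : |a / √x| ≤ 1 := by
    rw [abs_div, abs_of_pos hs, div_le_one hs]
    exact abs_le_sqrt h
  rw [cos_arccos (abs_le.mp habs).1 (abs_le.mp habs).2, mul_div_cancel₀ _ hs.ne']

theorem sqrt_mul_sin_arccos_div_sqrt {a x : ℝ} (h : a ^ 2 ≤ x) :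
    √x * sin (arccos (a / √x)) = √(x - a ^ 2) := by
  have hx : 0 ≤ x := (sq_nonneg a).trans h
  rw [sin_arccos, ← sqrt_mul hx, div_pow, sq_sqrt hx]
  rcases hx.eq_or_lt with hx | hx
  · simp [← hx, show a = 0 by nlinarith]
  · rw [mul_sub, mul_one, mul_div_cancel₀ _ hx.ne']

theorem traceless_fin_two_mul_self {R : Type*} [CommRing R] (a b c : R) :
    !![-a, b; c, a] * !![-a, b; c, a] = (a ^ 2 + b * c) • (1 : Matrix (Fin 2) (Fin 2) R) := by
  ext i j
  fin_cases i <;> fin_cases j <;> simp [sq] <;> ring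

theorem Gp_pow_general (η θ : ℝ)
    (Ap Am B φ : ℝ)
    (hAp : Ap = (1 + η) * Real.cos (2 * θ) / 2)
    (hAm : Am = (1 - η) * Real.cos (2 * θ) / 2)
    (hB : B = Real.sqrt (η - Ap ^ 2))
    (hφ : φ = Real.arccos (Ap / Real.sqrt η))
    (h : Ap ^ 2 < η) (t : ℕ) :
    (Gp η θ) ^ t =
      ((Real.sqrt η) ^ t / B) •
        !![B * Real.cos (φ * t) - Am * Real.sin (φ * t),
            Real.sin (φ * t) * Real.sin (2 * θ);
           -η * Real.sin (φ * t) * Real.sin (2 * θ),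
            B * Real.cos (φ * t) + Am * Real.sin (φ * t)] := by
  have hcos : √η * cos φ = Ap := hφ ▸ sqrt_mul_cos_arccos_div_sqrt h.le
  have hsin : √η * sin φ = B := hφ ▸ hB ▸ sqrt_mul_sin_arccos_div_sqrt h.le
  have hB0 : B ≠ 0 := hB ▸ (sqrt_pos.mpr (sub_pos.mpr h)).ne'
  set K := !![-Am, sin (2 * θ); -η * sin (2 * θ), Am]
  have hK : K * K = (-B ^ 2) • 1 := by
    rw [traceless_fin_two_mul_self, hB, sq_sqrt (sub_nonneg.mpr h.le), hAp, hAm]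
    congr 1
    linear_combination (-η) * sin_sq_add_cos_sq (2 * θ)
  have hJ : (B⁻¹ • K) * (B⁻¹ • K) = -1 := by
    rw [smul_mul_smul_comm, hK, smul_smul, show B⁻¹ * B⁻¹ * -B ^ 2 = -1 by field_simp,
      neg_one_smul]
  have hGK : Gp η θ = Ap • 1 + K := by
    ext i j
    fin_cases i <;> fin_cases j <;> simp [Gp, K, hAp, hAm] <;> ring
  have hG : Gp η θ = √η • (cos φ • 1 + sin φ • B⁻¹ • K) := by
    rw [hGK, smul_add, smul_smul, ← mul_smul, hcos, hsin, smul_inv_smul₀ hB0]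
  rw [hG, smul_pow, cos_smul_one_add_sin_smul_pow hJ]
  ext i j
  fin_cases i <;> fin_cases j <;> simp [K] <;> field_simp
  ring

theorem Gp_pow (η θ : ℝ) (hη : 0 < η)
    (Ap Am B φ : ℝ)
    (hAp : Ap = (1 + η) * Real.cos (2 * θ) / 2)
    (hAm : Am = (1 - η) * Real.cos (2 * θ) / 2)
    (hB : B = Real.sqrt (η - Ap ^ 2))
    (hφ : φ = Real.arccos (Ap / Real.sqrt η))
    (h : Ap ^ 2 < η) (t : ℕ) :
    (Gp η θ) ^ t =
      ((Real.sqrt η) ^ t / B) •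
        !![B * Real.cos (φ * t) - Am * Real.sin (φ * t),
            Real.sin (φ * t) * Real.sin (2 * θ);
           -η * Real.sin (φ * t) * Real.sin (2 * θ),
            B * Real.cos (φ * t) + Am * Real.sin (φ * t)] :=
  Gp_pow_general η θ Ap Am B φ hAp hAm hB hφ h t
end

section
/- Let η, θ ∈ ℝ with 0 < η and η > A₊², where A₊ = (1+η)cos(2θ)/2, A₋ = (1−η)cos(2θ)/2, B = √(η − A₊²), φ = arccos(A₊/√η). Let v₀ = (sin θ, cos θ) ∈ ℝ² and for t ∈ ℕ let r_z(t) be the second component of G_p(η,θ)^t · v₀. Then the success probability P_p(t) := (1 − r_z(t))/2 satisfies P_p(t) = 1/2 + ((√η)^t / (2B)) · [η sin(φt) sin(2θ) sin θ − (B cos(φt) + A₋ sin(φt)) cos θ]. -/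
/-!
The noisy Grover matrix has trace `2 A₊` and determinant `η`, so by Cayley–Hamilton
`G² = 2 A₊ G - η`. Writing `A₊ = √η cos φ` and `B = √η sin φ`, the eigenvalues are
`√η e^{± i φ}` and every power is a combination `G^t = α_t G + β_t` whose coefficients are
`√η^t sin(t φ) / B` and `-√η^{t+1} sin((t-1) φ) / B`. Applying this to the initial Bloch vector
and using `cos 2θ - A₊ = A₋` gives the formula.
-/

open Matrix Real

theorem Matrix.sq_eq_trace_smul_sub_det_smul_fin_two {R : Type*} [CommRing R]
    (M : Matrix (Fin 2) (Fin 2) R) : M ^ 2 = M.trace • M - M.det • 1 := by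
  ext i j
  fin_cases i <;> fin_cases j <;>
    simp [sq, mul_apply, trace_fin_two, det_fin_two] <;> ring

/-- The coefficients are `q ^ n` times Chebyshev polynomials of the second kind in `cos φ`,
written through `sin (n φ) / sin φ`; multiplying by `q sin φ` keeps the identity division-free. -/
theorem smul_pow_eq_of_sq_eq {R : Type*} [Ring R] [Algebra ℝ R] {M : R} {q φ : ℝ}
    (hM : M ^ 2 = (2 * q * cos φ) • M - q ^ 2 • 1) (n : ℕ) :
    (q * sin φ) • M ^ n = (q ^ n * sin (φ * n)) • M - (q ^ (n + 1) * sin (φ * (n - 1))) • 1 := by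
  induction n with
  | zero => simp [← neg_smul]
  | succ n ih =>
    have hsin : sin (φ * (n + 1)) = 2 * sin (φ * n) * cos φ - sin (φ * (n - 1)) := by
      rw [mul_add, mul_sub, mul_one, sin_add, sin_sub]; ring
    calc (q * sin φ) • M ^ (n + 1) = ((q * sin φ) • M ^ n) * M := by
          rw [pow_succ, smul_mul_assoc]
      _ = (q ^ n * sin (φ * n)) • M ^ 2 - (q ^ (n + 1) * sin (φ * (n - 1))) • M := by
          rw [ih, sub_mul, smul_mul_assoc, smul_mul_assoc, one_mul, sq]
      _ = _ := by
          rw [hM]; push_cast; rw [add_sub_cancel_right, hsin]; module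

theorem mul_cos_arccos_div {x y : ℝ} (hy : 0 < y) (hxy : |x| ≤ y) :
    y * cos (arccos (x / y)) = x := by
  obtain ⟨hlo, hhi⟩ := abs_le.mp hxy
  rw [cos_arccos ((le_div_iff₀ hy).mpr (by linarith)) ((div_le_one hy).mpr hhi)]
  field_simp

theorem mul_sin_arccos_div {x y : ℝ} (hy : 0 < y) :
    y * sin (arccos (x / y)) = √(y ^ 2 - x ^ 2) := by
  rw [sin_arccos, show y ^ 2 - x ^ 2 = y ^ 2 * (1 - (x / y) ^ 2) by field_simp,
    sqrt_mul (sq_nonneg y), sqrt_sq hy.le]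

theorem trace_Gp (η θ : ℝ) : (Gp η θ).trace = (1 + η) * cos (2 * θ) := by
  rw [Gp, trace_fin_two_of]; ring

theorem det_Gp (η θ : ℝ) : (Gp η θ).det = η := by
  rw [Gp, det_fin_two_of]; linear_combination η * sin_sq_add_cos_sq (2 * θ)

theorem Gp_mulVec_apply_one (η θ : ℝ) (v : Fin 2 → ℝ) :
    (Gp η θ *ᵥ v) 1 = -η * sin (2 * θ) * v 0 + cos (2 * θ) * v 1 := by
  simp [Gp, mulVec, dotProduct, Fin.sum_univ_two]

theorem Gp_success_probability (η θ : ℝ) (hη : 0 < η)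
    (Ap Am B φ : ℝ)
    (hAp : Ap = (1 + η) * Real.cos (2 * θ) / 2)
    (hAm : Am = (1 - η) * Real.cos (2 * θ) / 2)
    (hB : B = Real.sqrt (η - Ap ^ 2))
    (hφ : φ = Real.arccos (Ap / Real.sqrt η))
    (h : Ap ^ 2 < η) (t : ℕ) :
    (1 - ((Gp η θ) ^ t).mulVec ![Real.sin θ, Real.cos θ] 1) / 2 =
      1 / 2 + ((Real.sqrt η) ^ t / (2 * B)) *
        (η * Real.sin (φ * t) * Real.sin (2 * θ) * Real.sin θ -
          (B * Real.cos (φ * t) + Am * Real.sin (φ * t)) * Real.cos θ) := by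
  set q := √η
  have hq : 0 < q := sqrt_pos.mpr hη
  have hq2 : q ^ 2 = η := sq_sqrt hη.le
  have hB0 : B ≠ 0 := (hB ▸ sqrt_pos.mpr (by linarith)).ne'
  have hcos : q * cos φ = Ap := hφ ▸ mul_cos_arccos_div hq (abs_le_sqrt h.le)
  have hsin : q * sin φ = B := by rw [hφ, mul_sin_arccos_div hq, hq2, hB]
  have hG : Gp η θ ^ 2 = (2 * q * cos φ) • Gp η θ - q ^ 2 • 1 := by
    rw [sq_eq_trace_smul_sub_det_smul_fin_two, trace_Gp, det_Gp, mul_assoc, hcos, hq2, hAp]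
    congr 2; ring
  have hpow := congrArg (fun M => (M *ᵥ ![sin θ, cos θ]) 1) (smul_pow_eq_of_sq_eq hG t)
  simp only [smul_mulVec, sub_mulVec, one_mulVec, Pi.smul_apply, Pi.sub_apply, smul_eq_mul,
    hsin] at hpow
  have hshift : q ^ (t + 1) * sin (φ * (t - 1)) = q ^ t * (Ap * sin (φ * t) - B * cos (φ * t)) := by
    rw [mul_sub, mul_one, sin_sub, ← hcos, ← hsin]; ring
  rw [Gp_mulVec_apply_one, hshift] at hpow
  simp only [cons_val_zero, cons_val_one] at hpow
  have hAm' : Am = cos (2 * θ) - Ap := by rw [hAm, hAp]; ring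
  field_simp
  linear_combination -hpow + q ^ t * sin (φ * t) * cos θ * hAm'
end
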